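/- arXiv:1401.0235 — 4 statements merged into one kernel-verified Lean document; each statement's English description precedes it below -/
import Mathlib

section
/- Under the stated setup, limsup_{N→∞} ε^N ≤ ε. -/
open Filter Topology

/-- Second half of the consistency theorem: `limsup_{N→∞} ε^N ≤ ε`. -/
theorem unobservability_limsup
    (X : Type*) [NormedAddCommGroup X] [NormedSpace ℝ X] [CompleteSpace X]
    (T : ℝ) (hT : 0 < T)
    (D0 : Set X) (hD0 : IsOpen D0)
    -- the solution operator of the PDE, with value in curves `C([0,T], X)` (sup norm)
    (S : X → C(Set.Icc (0:ℝ) T, X))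
    (hS0 : ∀ v ∈ D0, S v ⟨0, by constructor <;> simp [hT.le]⟩ = v)
    (hScont : ContinuousOn S D0)
    -- the finite-dimensional space for estimation
    (W : Subspace ℝ X) [FiniteDimensional ℝ W]
    -- the approximating ODE solution operators and the norms on `ℝ^N`
    (SN : ∀ N : ℕ, (Fin N → ℝ) → C(Set.Icc (0:ℝ) T, Fin N → ℝ))
    (hSN0 : ∀ N a, SN N a ⟨0, by constructor <;> simp [hT.le]⟩ = a)
    (nrm : ∀ N : ℕ, Seminorm ℝ (Fin N → ℝ))
    (hnrm : ∀ N, ∀ x : Fin N → ℝ, nrm N x = 0 → x = 0)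
    (P : ∀ N : ℕ, X →ₗ[ℝ] (Fin N → ℝ))
    (Φ : ∀ N : ℕ, (Fin N → ℝ) →L[ℝ] X)
    -- (i) uniform convergence of the approximation scheme on bounded sets
    (hconv : ∀ B ⊆ D0, Bornology.IsBounded B →
      ∃ M > (0:ℝ), ∃ α > (0:ℝ), ∀ v ∈ B, ∀ N : ℕ, 1 ≤ N → ∀ t : Set.Icc (0:ℝ) T,
        ‖S v t - Φ N (SN N (P N v) t)‖ ≤ M / (N : ℝ) ^ α)
    -- (ii) consistency of the norms on `W`
    (hnorms : ∃ a : ℕ → ℝ, Tendsto a atTop (𝓝 0) ∧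
      ∀ v ∈ W, ∀ N : ℕ, ‖v‖ = (1 + a N) * nrm N (P N v))
    -- every point of `W^N ∩ P^N(D0)` comes from a point of `W ∩ D0`
    (hproj : ∀ N : ℕ, ∀ x ∈ (P N '' (W : Set X)) ∩ (P N '' D0),
      ∃ v ∈ (W : Set X) ∩ D0, P N v = x)
    -- the output map, sequentially continuous w.r.t. uniform convergence
    (Y : Type*) [NormedAddCommGroup Y] [NormedSpace ℝ Y]
    (𝓨 : C(Set.Icc (0:ℝ) T, X) → Y)
    (h𝓨 : ∀ (w : ℕ → C(Set.Icc (0:ℝ) T, X)) (wl : C(Set.Icc (0:ℝ) T, X)),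
      Tendsto w atTop (𝓝 wl) → Tendsto (fun k => ‖𝓨 (w k) - 𝓨 wl‖) atTop (𝓝 0))
    -- the nominal initial state and the level `ρ`
    (u0 : X) (hu0W : u0 ∈ W) (hu0D : u0 ∈ D0) (ρ : ℝ) (hρ : 0 < ρ)
    (hsph_ne : {v : X | v ∈ W ∧ ‖v - u0‖ = ρ}.Nonempty)
    (hsph : {v : X | v ∈ W ∧ ‖v - u0‖ = ρ} ⊆ D0)
    (hsphN : ∀ N : ℕ, ∀ a ∈ P N '' (W : Set X), nrm N (a - P N u0) = ρ → a ∈ P N '' D0) :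
    Filter.limsup
      (fun N : ℕ => sInf {r : ℝ | ∃ a ∈ P N '' (W : Set X), nrm N (a - P N u0) = ρ ∧
        r = ‖𝓨 (((Φ N : C(Fin N → ℝ, X)).comp (SN N a))) -
            𝓨 (((Φ N : C(Fin N → ℝ, X)).comp (SN N (P N u0))))‖})
      Filter.atTop ≤
    sInf {r : ℝ | ∃ v, v ∈ W ∧ v ∈ D0 ∧ ‖v - u0‖ = ρ ∧ r = ‖𝓨 (S v) - 𝓨 (S u0)‖} := by
  classical
  obtain ⟨a, ha0, haW⟩ := hnorms
  -- RHS set is nonempty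
  obtain ⟨v0, hv0W, hv0ρ⟩ := hsph_ne
  have hEne : {r : ℝ | ∃ v, v ∈ W ∧ v ∈ D0 ∧ ‖v - u0‖ = ρ ∧
      r = ‖𝓨 (S v) - 𝓨 (S u0)‖}.Nonempty :=
    ⟨_, v0, hv0W, hsph ⟨hv0W, hv0ρ⟩, hv0ρ, rfl⟩
  set g : ℕ → ℝ := fun N => sInf {r : ℝ | ∃ a ∈ P N '' (W : Set X),
      nrm N (a - P N u0) = ρ ∧
      r = ‖𝓨 (((Φ N : C(Fin N → ℝ, X)).comp (SN N a))) -
          𝓨 (((Φ N : C(Fin N → ℝ, X)).comp (SN N (P N u0))))‖} with hg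
  have hg0 : ∀ N, 0 ≤ g N := by
    intro N
    refine Real.sInf_nonneg ?_
    rintro x ⟨b, -, -, rfl⟩
    exact norm_nonneg _
  have hgcob : IsCoboundedUnder (· ≤ ·) atTop g :=
    Filter.IsBoundedUnder.isCoboundedUnder_le ⟨0, Filter.eventually_map.mpr (Filter.Eventually.of_forall hg0)⟩
  refine le_csInf hEne ?_
  rintro r ⟨v, hvW, hvD, hvρ, rfl⟩
  -- the perturbed initial values
  set vN : ℕ → X := fun N => u0 + (1 + a N) • (v - u0) with hvN
  have hvNW : ∀ N, vN N ∈ W := fun N =>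
    W.add_mem hu0W (W.smul_mem _ (W.sub_mem hvW hu0W))
  have hvNtend : Tendsto vN atTop (𝓝 v) := by
    have h1 : Tendsto (fun N => (1 + a N) • (v - u0)) atTop (𝓝 ((1 + (0:ℝ)) • (v - u0))) :=
      (Filter.Tendsto.add tendsto_const_nhds ha0).smul tendsto_const_nhds
    have := h1.const_add u0
    simpa using this
  have hpos : ∀ᶠ N in atTop, 0 < 1 + a N := by
    have : ∀ᶠ N in atTop, a N > -1 := ha0.eventually (eventually_gt_nhds (by norm_num))
    filter_upwards [this] with N hN; linarith
  -- key norm identity for P N (vN N)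
  have hkey : ∀ N, 0 < 1 + a N → nrm N (P N (vN N) - P N u0) = ρ := by
    intro N hN
    have h1 : ρ = (1 + a N) * nrm N (P N (v - u0)) := by
      rw [← hvρ]; exact haW _ (W.sub_mem hvW hu0W) N
    have h2 : P N (vN N) - P N u0 = (1 + a N) • P N (v - u0) := by
      rw [← map_sub, ← map_smul]
      congr 1
      simp [hvN]
    rw [h2, map_smul_eq_mul, Real.norm_eq_abs, abs_of_pos hN]
    field_simp at h1 ⊢
    linarith [h1]
  -- membership of P N (vN N) in the discrete sphere, and vN N ∈ D0
  have hmemW : ∀ N, P N (vN N) ∈ P N '' (W : Set X) := fun N => ⟨vN N, hvNW N, rfl⟩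
  have hvND : ∀ N, 0 < 1 + a N → vN N ∈ D0 := by
    intro N hN
    have hD : P N (vN N) ∈ P N '' D0 := hsphN N _ (hmemW N) (hkey N hN)
    obtain ⟨w, ⟨hwW, hwD⟩, hPw⟩ := hproj N _ ⟨hmemW N, hD⟩
    have hzero : ‖w - vN N‖ = (1 + a N) * nrm N (P N (w - vN N)) :=
      haW _ (W.sub_mem hwW (hvNW N)) N
    rw [map_sub, hPw, sub_self, map_zero, mul_zero] at hzero
    have : w = vN N := by
      have := sub_eq_zero.mp (norm_eq_zero.mp hzero)
      exact this
    rwa [← this]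
  -- a bounded subset of D0 containing u0 and the relevant vN N
  set B : Set X := insert u0 {x | ∃ N, 0 < 1 + a N ∧ x = vN N} with hB
  have hBD : B ⊆ D0 := by
    rintro x (rfl | ⟨N, hN, rfl⟩)
    · exact hu0D
    · exact hvND N hN
  have hBb : Bornology.IsBounded B := by
    refine (Bornology.IsBounded.insert ?_ u0)
    refine (Metric.isBounded_range_of_tendsto vN hvNtend).subset ?_
    rintro x ⟨N, -, rfl⟩
    exact ⟨N, rfl⟩
  obtain ⟨M, hM, α, hα, hbound⟩ := hconv B hBD hBb
  -- the error bound tends to zero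
  have hMα : Tendsto (fun N : ℕ => M / (N : ℝ) ^ α) atTop (𝓝 0) := by
    apply Filter.Tendsto.div_atTop (tendsto_const_nhds)
    exact (tendsto_rpow_atTop hα).comp tendsto_natCast_atTop_atTop
  have hMα0 : ∀ N : ℕ, 1 ≤ N → 0 ≤ M / (N : ℝ) ^ α := by
    intro N hN
    have : (0:ℝ) < (N : ℝ) ^ α := Real.rpow_pos_of_pos (by exact_mod_cast hN) α
    positivity
  -- the approximate trajectories
  set w1 : ℕ → C(Set.Icc (0:ℝ) T, X) :=
    fun N => ((Φ N : C(Fin N → ℝ, X)).comp (SN N (P N (vN N)))) with hw1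
  set w2 : ℕ → C(Set.Icc (0:ℝ) T, X) :=
    fun N => ((Φ N : C(Fin N → ℝ, X)).comp (SN N (P N u0))) with hw2
  have hdist2 : ∀ N : ℕ, 1 ≤ N → dist (w2 N) (S u0) ≤ M / (N : ℝ) ^ α := by
    intro N hN
    rw [ContinuousMap.dist_le (hMα0 N hN)]
    intro t
    rw [dist_comm, dist_eq_norm]
    exact hbound u0 (Set.mem_insert _ _) N hN t
  have hw2tend : Tendsto w2 atTop (𝓝 (S u0)) := by
    rw [tendsto_iff_dist_tendsto_zero]
    refine squeeze_zero' (Filter.Eventually.of_forall fun N => dist_nonneg) ?_ hMα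
    filter_upwards [eventually_ge_atTop 1] with N hN using hdist2 N hN
  have hSvNtend : Tendsto (fun N => S (vN N)) atTop (𝓝 (S v)) := by
    have hcv : ContinuousAt S v := hScont.continuousAt (hD0.mem_nhds hvD)
    exact hcv.tendsto.comp hvNtend
  have hw1tend : Tendsto w1 atTop (𝓝 (S v)) := by
    rw [tendsto_iff_dist_tendsto_zero]
    refine squeeze_zero' (Filter.Eventually.of_forall fun N => dist_nonneg) ?_
      (by simpa using hMα.add (tendsto_iff_dist_tendsto_zero.mp hSvNtend))
    filter_upwards [eventually_ge_atTop 1, hpos] with N hN1 hNp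
    have hmemB : vN N ∈ B := Set.mem_insert_iff.mpr (Or.inr ⟨N, hNp, rfl⟩)
    have hd1 : dist (w1 N) (S (vN N)) ≤ M / (N : ℝ) ^ α := by
      rw [ContinuousMap.dist_le (hMα0 N hN1)]
      intro t
      rw [dist_comm, dist_eq_norm]
      exact hbound (vN N) hmemB N hN1 t
    calc dist (w1 N) (S v) ≤ dist (w1 N) (S (vN N)) + dist (S (vN N)) (S v) :=
          dist_triangle _ _ _
      _ ≤ M / (N : ℝ) ^ α + dist (S (vN N)) (S v) := by gcongr
  -- pass through the output map
  have hY1 : Tendsto (fun N => 𝓨 (w1 N)) atTop (𝓝 (𝓨 (S v))) :=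
    tendsto_iff_norm_sub_tendsto_zero.mpr (h𝓨 w1 (S v) hw1tend)
  have hY2 : Tendsto (fun N => 𝓨 (w2 N)) atTop (𝓝 (𝓨 (S u0))) :=
    tendsto_iff_norm_sub_tendsto_zero.mpr (h𝓨 w2 (S u0) hw2tend)
  have hftend : Tendsto (fun N => ‖𝓨 (w1 N) - 𝓨 (w2 N)‖) atTop
      (𝓝 ‖𝓨 (S v) - 𝓨 (S u0)‖) := (hY1.sub hY2).norm
  -- eventually g N ≤ f N
  have hgle : ∀ᶠ N in atTop, g N ≤ ‖𝓨 (w1 N) - 𝓨 (w2 N)‖ := by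
    filter_upwards [hpos] with N hN
    refine csInf_le ⟨0, ?_⟩ ?_
    · rintro x ⟨b, -, -, rfl⟩
      exact norm_nonneg _
    · exact ⟨P N (vN N), hmemW N, hkey N hN, rfl⟩
  calc limsup g atTop ≤ limsup (fun N => ‖𝓨 (w1 N) - 𝓨 (w2 N)‖) atTop :=
        limsup_le_limsup hgle hgcob hftend.isBoundedUnder_le
    _ = ‖𝓨 (S v) - 𝓨 (S u0)‖ := hftend.limsup_eq
end

section
/- For a linear system the empirical Gramian computes the unobservability level exactly: inf { ∫_0^T ‖y_{x̂}(t) − y_{x0}(t)‖² dt : x̂ = x0 + Σ_{i=1}^s a_i e_i with Σ_{i=1}^s a_i² = ρ² } = σ_min ρ², where σ_min is the smallest eigenvalue of the symmetric matrix G. -/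
/-!
For a linear output map the central differences are exact, `Δy_i = 2ρ · C e^{tA} e_i`, so `G` is
the Gram matrix in `L²(0, T)` of the responses `w_i(t) = C e^{tA} e_i`, and the cost of
`x0 + ∑ a_i e_i` is the quadratic form `aᵀ G a`. On the sphere `|a| = ρ` this form is bounded
below by `σ_min ρ²` because `G - σ_min I` is positive semidefinite (spectral theorem), and a
rescaled eigenvector for `σ_min` attains the bound.
-/

open scoped Matrix ComplexOrder
open Matrix Unitary

lemma Matrix.IsHermitian.posSemidef_sub_smul_one {𝕜 n : Type*} [RCLike 𝕜] [Fintype n]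
    [DecidableEq n] {A : Matrix n n 𝕜} (hA : A.IsHermitian) {c : ℝ}
    (hc : ∀ i, c ≤ hA.eigenvalues i) : (A - (c : 𝕜) • 1).PosSemidef := by
  have hdiag : diagonal (fun i ↦ ((hA.eigenvalues i - c : ℝ) : 𝕜)) =
      diagonal (RCLike.ofReal ∘ hA.eigenvalues) - (c : 𝕜) • 1 := by
    ext i j
    by_cases h : i = j <;> simp [h, Algebra.algebraMap_eq_smul_one, sub_smul]
  have hconj : A - (c : 𝕜) • 1 = conjStarAlgAut 𝕜 _ hA.eigenvectorUnitary
      (diagonal fun i ↦ ((hA.eigenvalues i - c : ℝ) : 𝕜)) := by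
    rw [hdiag, map_sub, map_smul, map_one, ← hA.spectral_theorem]
  rw [hconj]
  simp [isUnit_coe.posSemidef_star_right_conjugate_iff, hc]

lemma Matrix.IsHermitian.mul_dotProduct_self_le {n : Type*} [Fintype n]
    [DecidableEq n] {A : Matrix n n ℝ} (hA : A.IsHermitian) {c : ℝ}
    (hc : ∀ i, c ≤ hA.eigenvalues i) (x : n → ℝ) : c * (x ⬝ᵥ x) ≤ x ⬝ᵥ (A *ᵥ x) := by
  simpa [sub_mulVec, dotProduct_sub, smul_mulVec] using
    (hA.posSemidef_sub_smul_one hc).dotProduct_mulVec_nonneg x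

theorem Matrix.IsHermitian.isLeast_dotProduct_mulVec_sphere {n : Type*} [Fintype n]
    [DecidableEq n] {A : Matrix n n ℝ} (hA : A.IsHermitian) {σ : ℝ}
    (hσ : IsLeast {μ | ∃ ξ : n → ℝ, ξ ≠ 0 ∧ A *ᵥ ξ = μ • ξ} σ) (ρ : ℝ) :
    IsLeast {q | ∃ a : n → ℝ, a ⬝ᵥ a = ρ ^ 2 ∧ q = a ⬝ᵥ (A *ᵥ a)} (σ * ρ ^ 2) := by
  constructor
  · obtain ⟨ξ, hξ0, hξ⟩ := hσ.1
    have hξpos : 0 < ξ ⬝ᵥ ξ := by simpa using dotProduct_star_self_pos_iff.mpr hξ0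
    set k := ρ / √(ξ ⬝ᵥ ξ)
    have hk : k ^ 2 * (ξ ⬝ᵥ ξ) = ρ ^ 2 := by
      rw [div_pow, Real.sq_sqrt hξpos.le, div_mul_cancel₀ _ hξpos.ne']
    refine ⟨k • ξ, by simpa [smul_dotProduct, dotProduct_smul, ← mul_assoc, ← sq] using hk, ?_⟩
    simp [mulVec_smul, hξ, smul_dotProduct, dotProduct_smul, ← hk]
    ring
  · rintro _ ⟨a, ha, rfl⟩
    rw [← ha]
    refine hA.mul_dotProduct_self_le (fun i ↦ hσ.2 ⟨_, ?_, hA.mulVec_eigenvectorBasis i⟩) a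
    exact (WithLp.ofLp_eq_zero 2).not.mpr (hA.eigenvectorBasis.orthonormal.ne_zero i)

noncomputable def intervalGram {ι m : Type*} [Fintype m] (w : ι → ℝ → m → ℝ) (a b : ℝ) :
    Matrix ι ι ℝ :=
  of fun i j ↦ ∫ t in a..b, w i t ⬝ᵥ w j t

section intervalGram
variable {ι m : Type*} [Fintype m] {w : ι → ℝ → m → ℝ} (a b : ℝ)

lemma intervalGram_isHermitian : (intervalGram w a b).IsHermitian := by
  ext i j
  simp [intervalGram, dotProduct_comm]

lemma integral_sum_smul_dotProduct_sum_smul [Fintype ι] (hw : ∀ i, Continuous (w i)) (c : ι → ℝ) :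
    ∫ t in a..b, (∑ i, c i • w i t) ⬝ᵥ (∑ i, c i • w i t) =
      c ⬝ᵥ (intervalGram w a b *ᵥ c) := by
  have hcont : ∀ i j, Continuous fun t ↦ c i * c j * (w i t ⬝ᵥ w j t) :=
    fun i j ↦ continuous_const.mul ((hw i).dotProduct (hw j))
  have hpt : ∀ t, (∑ i, c i • w i t) ⬝ᵥ (∑ i, c i • w i t) =
      ∑ i, ∑ j, c i * c j * (w i t ⬝ᵥ w j t) := by
    intro t
    simp only [sum_dotProduct, smul_dotProduct, dotProduct_sum, dotProduct_smul, smul_eq_mul,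
      Finset.mul_sum, mul_assoc]
    exact Finset.sum_congr rfl fun i _ ↦ Finset.sum_congr rfl fun j _ ↦ by rw [dotProduct_comm]
  simp_rw [hpt]
  rw [intervalIntegral.integral_finsetSum fun i _ ↦
    (continuous_finsetSum _ fun j _ ↦ hcont i j).intervalIntegrable a b]
  simp_rw [intervalIntegral.integral_finsetSum fun j _ ↦ (hcont _ j).intervalIntegrable a b,
    intervalIntegral.integral_const_mul]
  simp only [dotProduct, mulVec, intervalGram, of_apply, Finset.mul_sum]
  exact Finset.sum_congr rfl fun i _ ↦ Finset.sum_congr rfl fun j _ ↦ by ring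

end intervalGram

lemma continuous_mul_exp_smul {m n : Type*} [Fintype n] [DecidableEq n] (C : Matrix m n ℝ)
    (A : Matrix n n ℝ) : Continuous fun t : ℝ ↦ C * NormedSpace.exp (t • A) := by
  let _ : NormedRing (Matrix n n ℝ) := Matrix.linftyOpNormedRing
  let _ : NormedAlgebra ℝ (Matrix n n ℝ) := Matrix.linftyOpNormedAlgebra
  let _ : NormedAlgebra ℚ (Matrix n n ℝ) := .restrictScalars ℚ ℝ _
  fun_prop

theorem empirical_gramian_exact_linear_general
    (n p s : ℕ)
    (A : Matrix (Fin n) (Fin n) ℝ) (C : Matrix (Fin p) (Fin n) ℝ)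
    (T ρ : ℝ) (hρ : 0 < ρ)
    -- the output map `y_x(t) = C e^{tA} x`
    (y : (Fin n → ℝ) → ℝ → (Fin p → ℝ))
    (hy : ∀ x t, y x t = C.mulVec ((NormedSpace.exp (t • A)).mulVec x))
    (e : Fin s → (Fin n → ℝ))
    (x0 : Fin n → ℝ)
    -- the output deviations `Δy_i` and the empirical Gramian `G`
    (Δy : Fin s → ℝ → (Fin p → ℝ))
    (hΔy : ∀ i t, Δy i t = y (x0 + ρ • e i) t - y (x0 - ρ • e i) t)
    (G : Matrix (Fin s) (Fin s) ℝ)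
    (hG : ∀ i j, G i j = (1 / (4 * ρ ^ 2)) * ∫ t in (0:ℝ)..T, ∑ k, Δy i t k * Δy j t k)
    -- `σmin` is the smallest eigenvalue of the symmetric matrix `G`
    (σmin : ℝ)
    (hσ : IsLeast {σ : ℝ | ∃ ξ : Fin s → ℝ, ξ ≠ 0 ∧ G.mulVec ξ = σ • ξ} σmin) :
    sInf {r : ℝ | ∃ a : Fin s → ℝ, (∑ i, (a i) ^ 2) = ρ ^ 2 ∧
        r = ∫ t in (0:ℝ)..T, ∑ k, (y (x0 + ∑ i, a i • e i) t k - y x0 t k) ^ 2} =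
      σmin * ρ ^ 2 := by
  set w : Fin s → ℝ → Fin p → ℝ := fun i t ↦ (C * NormedSpace.exp (t • A)) *ᵥ e i
  have hy' : ∀ x t, y x t = (C * NormedSpace.exp (t • A)) *ᵥ x := by simp [hy, mulVec_mulVec]
  have hw : ∀ i, Continuous (w i) := fun i ↦
    (continuous_mul_exp_smul C A).matrix_mulVec continuous_const
  have hΔ : ∀ i t, Δy i t = (2 * ρ) • w i t := by
    intro i t
    rw [hΔy, hy', hy', mulVec_add, mulVec_sub, mulVec_smul]
    module
  have hGw : G = intervalGram w 0 T := by
    ext i j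
    have hpt : ∀ t, ∑ k, Δy i t k * Δy j t k = 4 * ρ ^ 2 * (w i t ⬝ᵥ w j t) := fun t ↦ by
      change Δy i t ⬝ᵥ Δy j t = _
      rw [hΔ, hΔ, smul_dotProduct, dotProduct_smul, smul_eq_mul, smul_eq_mul]
      ring
    simp only [hG, hpt, intervalIntegral.integral_const_mul, intervalGram, of_apply]
    field_simp
  have hcost : ∀ a : Fin s → ℝ,
      ∫ t in (0:ℝ)..T, ∑ k, (y (x0 + ∑ i, a i • e i) t k - y x0 t k) ^ 2 = a ⬝ᵥ (G *ᵥ a) := by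
    intro a
    have hdiff : ∀ t, y (x0 + ∑ i, a i • e i) t - y x0 t = ∑ i, a i • w i t := by
      simp [hy', mulVec_add, mulVec_sum, mulVec_smul, w]
    simp only [sq, ← Pi.sub_apply (y _ _), hdiff]
    rw [hGw, ← integral_sum_smul_dotProduct_sum_smul 0 T hw]
    rfl
  have hsq : ∀ a : Fin s → ℝ, ∑ i, a i ^ 2 = a ⬝ᵥ a := fun a ↦ by simp [dotProduct, sq]
  simp_rw [hcost, hsq]
  exact ((hGw ▸ intervalGram_isHermitian 0 T).isLeast_dotProduct_mulVec_sphere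
    hσ ρ).csInf_eq

/-- For a linear system, the empirical Gramian computes the unobservability level exactly:
the infimum of the squared `L²` output deviation over perturbations of Euclidean size `ρ`
inside the span of the orthonormal family `e` equals `σ_min · ρ²`,
where `σ_min` is the smallest eigenvalue of the empirical Gramian `G`. -/
theorem empirical_gramian_exact_linear
    (n p s : ℕ) (hn : 0 < n) (hp : 0 < p) (hs : 0 < s)
    (A : Matrix (Fin n) (Fin n) ℝ) (C : Matrix (Fin p) (Fin n) ℝ)
    (T ρ : ℝ) (hT : 0 < T) (hρ : 0 < ρ)
    -- the output map `y_x(t) = C e^{tA} x`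
    (y : (Fin n → ℝ) → ℝ → (Fin p → ℝ))
    (hy : ∀ x t, y x t = C.mulVec ((NormedSpace.exp (t • A)).mulVec x))
    -- an orthonormal family in ℝⁿ (Euclidean inner product)
    (e : Fin s → (Fin n → ℝ))
    (he : ∀ i j, (∑ k, e i k * e j k) = if i = j then (1:ℝ) else 0)
    (x0 : Fin n → ℝ)
    -- the output deviations `Δy_i` and the empirical Gramian `G`
    (Δy : Fin s → ℝ → (Fin p → ℝ))
    (hΔy : ∀ i t, Δy i t = y (x0 + ρ • e i) t - y (x0 - ρ • e i) t)
    (G : Matrix (Fin s) (Fin s) ℝ)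
    (hG : ∀ i j, G i j = (1 / (4 * ρ ^ 2)) * ∫ t in (0:ℝ)..T, ∑ k, Δy i t k * Δy j t k)
    -- `σmin` is the smallest eigenvalue of the symmetric matrix `G`
    (σmin : ℝ)
    (hσ : IsLeast {σ : ℝ | ∃ ξ : Fin s → ℝ, ξ ≠ 0 ∧ G.mulVec ξ = σ • ξ} σmin) :
    sInf {r : ℝ | ∃ a : Fin s → ℝ, (∑ i, (a i) ^ 2) = ρ ^ 2 ∧
        r = ∫ t in (0:ℝ)..T, ∑ k, (y (x0 + ∑ i, a i • e i) t k - y x0 t k) ^ 2} =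
      σmin * ρ ^ 2 :=
  empirical_gramian_exact_linear_general n p s A C T ρ hρ y hy e x0 Δy hΔy G hG σmin hσ
end

section
/- For a linear system with a non-orthonormal basis of the estimation space, the unobservability level is given by the smallest generalized eigenvalue: inf { ∫_0^T ‖y_{x̂}(t) − y_{x0}(t)‖² dt : x̂ = x0 + w, w ∈ span{e_1, …, e_s}, ‖w‖ = ρ } = σ_min ρ², where σ_min is the smallest real number σ for which there exists a nonzero ξ ∈ ℝ^s with G ξ = σ S ξ. -/
/-!
Let `V` be the matrix with columns `e i`. Every admissible perturbation is `w = V ξ`, its squared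
norm is `ξ ⬝ Sξ` since `S = Vᵀ V`, and by linearity of the output in the state both
`y (x0 + w) - y x0` and the central differences `Δy i = 2ρ · C e^{tA} e i` are read off
`F t = C e^{tA} V`; hence `G = ∫ (F t)ᵀ F t` and the output energy of `w` is `ξ ⬝ Gξ`.
The problem becomes minimizing `ξ ⬝ Gξ` on the ellipsoid `ξ ⬝ Sξ = ρ²`. The quotient
`ξ ⬝ Gξ / ξ ⬝ Sξ` attains its minimum `σ` on the unit sphere, hence everywhere by homogeneity;
then `G - σS` is positive semidefinite with the minimizer in the null set of its quadratic form,
so the minimizer is a generalized eigenvector and `σ` is the least generalized eigenvalue.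
-/

open Matrix MeasureTheory

namespace Matrix

variable {ι m : Type*} [Fintype ι] [Fintype m]

theorem continuous_exp_smul [DecidableEq ι] (A : Matrix ι ι ℝ) :
    Continuous fun t : ℝ => NormedSpace.exp (t • A) := by
  let : NormedRing (Matrix ι ι ℝ) := Matrix.linftyOpNormedRing
  let : NormedAlgebra ℝ (Matrix ι ι ℝ) := Matrix.linftyOpNormedAlgebra
  exact continuous_iff_continuousAt.2 fun t => (hasDerivAt_exp_smul_const A t).continuousAt

theorem dotProduct_mulVec_transpose_mul_self {R : Type*} [CommSemiring R] (V : Matrix m ι R)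
    (ξ : ι → R) : ξ ⬝ᵥ (Vᵀ * V) *ᵥ ξ = V *ᵥ ξ ⬝ᵥ V *ᵥ ξ := by
  rw [← mulVec_mulVec, dotProduct_mulVec, vecMul_transpose]

theorem smul_dotProduct_mulVec_smul {R : Type*} [CommSemiring R] (M : Matrix ι ι R) (a : R)
    (ξ : ι → R) : a • ξ ⬝ᵥ M *ᵥ (a • ξ) = a ^ 2 * (ξ ⬝ᵥ M *ᵥ ξ) := by
  rw [mulVec_smul, smul_dotProduct, dotProduct_smul, smul_eq_mul, smul_eq_mul]
  ring

theorem dotProduct_mulVec_of_intervalIntegral {M : ℝ → Matrix ι ι ℝ} {a b : ℝ}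
    (hM : ∀ i j, IntervalIntegrable (fun t => M t i j) volume a b) (ξ : ι → ℝ) :
    ξ ⬝ᵥ (of fun i j => ∫ t in a..b, M t i j) *ᵥ ξ = ∫ t in a..b, ξ ⬝ᵥ M t *ᵥ ξ := by
  have hint : ∀ i j, IntervalIntegrable (fun t => ξ i * (M t i j * ξ j)) volume a b :=
    fun i j => ((hM i j).mul_const _).const_mul _
  simp only [dotProduct, mulVec, of_apply, Finset.mul_sum]
  rw [intervalIntegral.integral_finsetSum fun i _ => by
    simpa only [Finset.sum_fn] using IntervalIntegrable.sum _ fun j _ => hint i j]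
  refine Finset.sum_congr rfl fun i _ => ?_
  rw [intervalIntegral.integral_finsetSum fun j _ => hint i j]
  simp only [intervalIntegral.integral_const_mul, intervalIntegral.integral_mul_const]

theorem dotProduct_mulVec_intervalIntegral_transpose_mul_self {F : ℝ → Matrix m ι ℝ}
    (hF : Continuous F) (a b : ℝ) (ξ : ι → ℝ) :
    ξ ⬝ᵥ (of fun i j => ∫ t in a..b, ((F t)ᵀ * F t) i j) *ᵥ ξ =
      ∫ t in a..b, F t *ᵥ ξ ⬝ᵥ F t *ᵥ ξ := by
  rw [dotProduct_mulVec_of_intervalIntegral fun i j =>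
    ((hF.matrix_transpose.matrix_mul hF).matrix_elem i j).intervalIntegrable _ _]
  simp only [dotProduct_mulVec_transpose_mul_self]

theorem setOf_mem_span_col_eq_image (V : Matrix m ι ℝ) (Φ : (m → ℝ) → ℝ) {ρ : ℝ} (hρ : 0 < ρ) :
    {r : ℝ | ∃ w : m → ℝ, w ∈ Submodule.span ℝ (Set.range V.col) ∧
        √(∑ k, w k ^ 2) = ρ ∧ r = Φ w} =
      (fun ξ => Φ (V *ᵥ ξ)) '' {ξ | ξ ⬝ᵥ (Vᵀ * V) *ᵥ ξ = ρ ^ 2} := by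
  have hnorm : ∀ ξ, √(∑ k, (V *ᵥ ξ) k ^ 2) = ρ ↔ ξ ⬝ᵥ (Vᵀ * V) *ᵥ ξ = ρ ^ 2 := fun ξ => by
    rw [dotProduct_mulVec_transpose_mul_self, Real.sqrt_eq_iff_mul_self_eq_of_pos hρ, eq_comm, sq]
    simp only [dotProduct, sq]
  ext r
  simp only [← range_mulVecLin, LinearMap.mem_range, mulVecLin_apply, Set.mem_ofPred_eq,
    Set.mem_image]
  constructor
  · rintro ⟨_, ⟨ξ, rfl⟩, hξ, rfl⟩
    exact ⟨ξ, (hnorm ξ).1 hξ, rfl⟩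
  · rintro ⟨ξ, hξ, rfl⟩
    exact ⟨_, ⟨ξ, rfl⟩, (hnorm ξ).2 hξ, rfl⟩

variable {G S : Matrix ι ι ℝ}

theorem PosDef.exists_rayleigh_minimizer [Nonempty ι] (hS : S.PosDef) (G : Matrix ι ι ℝ) :
    ∃ σ ξ, ξ ≠ 0 ∧ ξ ⬝ᵥ G *ᵥ ξ = σ * (ξ ⬝ᵥ S *ᵥ ξ) ∧
      ∀ η, σ * (η ⬝ᵥ S *ᵥ η) ≤ η ⬝ᵥ G *ᵥ η := by
  have hpos : ∀ η : ι → ℝ, η ≠ 0 → 0 < η ⬝ᵥ S *ᵥ η := fun η hη => by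
    simpa using hS.dotProduct_mulVec_pos hη
  set R : (ι → ℝ) → ℝ := fun η => (η ⬝ᵥ G *ᵥ η) / (η ⬝ᵥ S *ᵥ η)
  have hR : ContinuousOn R (Metric.sphere 0 1) :=
    (Continuous.continuousOn (by fun_prop)).div (Continuous.continuousOn (by fun_prop))
      fun η hη => (hpos η (ne_zero_of_mem_unit_sphere ⟨η, hη⟩)).ne'
  obtain ⟨ξ, hξ, hmin⟩ := (isCompact_sphere (0 : ι → ℝ) 1).exists_isMinOn
    (NormedSpace.sphere_nonempty.2 zero_le_one) hR
  have hξ0 : ξ ≠ 0 := ne_zero_of_mem_unit_sphere ⟨ξ, hξ⟩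
  refine ⟨R ξ, ξ, hξ0, (div_mul_cancel₀ _ (hpos ξ hξ0).ne').symm, fun η => ?_⟩
  rcases eq_or_ne η 0 with rfl | hη
  · simp
  have hscale : R (‖η‖⁻¹ • η) = R η := by
    simp only [R, smul_dotProduct_mulVec_smul]
    exact mul_div_mul_left _ _ (pow_ne_zero 2 (inv_ne_zero (norm_ne_zero_iff.2 hη)))
  have hle : R ξ ≤ R η :=
    hscale ▸ hmin (mem_sphere_zero_iff_norm.2 (norm_smul_inv_norm hη))
  exact (le_div_iff₀ (hpos η hη)).1 hle

theorem exists_generalized_eigenpair_forall_mul_le [Nonempty ι] (hG : G.IsHermitian)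
    (hS : S.PosDef) :
    ∃ σ ξ, ξ ≠ 0 ∧ G *ᵥ ξ = σ • S *ᵥ ξ ∧ ∀ η, σ * (η ⬝ᵥ S *ᵥ η) ≤ η ⬝ᵥ G *ᵥ η := by
  obtain ⟨σ, ξ, hξ, hξσ, hle⟩ := hS.exists_rayleigh_minimizer G
  have hquad : ∀ η, η ⬝ᵥ (G - σ • S) *ᵥ η = η ⬝ᵥ G *ᵥ η - σ * (η ⬝ᵥ S *ᵥ η) := fun η => by
    rw [sub_mulVec, dotProduct_sub, smul_mulVec, dotProduct_smul, smul_eq_mul]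
  have hpsd : (G - σ • S).PosSemidef := posSemidef_iff_dotProduct_mulVec.2
    ⟨hG.sub (hS.isHermitian.smul (IsSelfAdjoint.all σ)), fun η => by
      simpa [hquad] using hle η⟩
  have hnull : (G - σ • S) *ᵥ ξ = 0 :=
    (hpsd.dotProduct_mulVec_zero_iff ξ).1 (by simp [hquad, hξσ])
  rw [sub_mulVec, smul_mulVec, sub_eq_zero] at hnull
  exact ⟨σ, ξ, hξ, hnull, hle⟩

theorem isLeast_image_dotProduct_mulVec (hG : G.IsHermitian) (hS : S.PosDef) {σ c : ℝ}
    (hσ : IsLeast {σ | ∃ ξ, ξ ≠ 0 ∧ G *ᵥ ξ = σ • S *ᵥ ξ} σ) (hc : 0 ≤ c) :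
    IsLeast ((fun ξ => ξ ⬝ᵥ G *ᵥ ξ) '' {ξ | ξ ⬝ᵥ S *ᵥ ξ = c}) (σ * c) := by
  obtain ⟨ξ, hξ, hGξ⟩ := hσ.1
  have : Nonempty ι := let ⟨i, _⟩ := Function.ne_iff.1 hξ; ⟨i⟩
  obtain ⟨τ, ζ, hζ, hGζ, hτ⟩ := exists_generalized_eigenpair_forall_mul_le hG hS
  have hpos : 0 < ξ ⬝ᵥ S *ᵥ ξ := by simpa using hS.dotProduct_mulVec_pos hξ
  have hsq : √(c / (ξ ⬝ᵥ S *ᵥ ξ)) ^ 2 * (ξ ⬝ᵥ S *ᵥ ξ) = c := by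
    rw [Real.sq_sqrt (div_nonneg hc hpos.le), div_mul_cancel₀ _ hpos.ne']
  refine ⟨⟨√(c / (ξ ⬝ᵥ S *ᵥ ξ)) • ξ, ?_, ?_⟩, ?_⟩
  · exact (smul_dotProduct_mulVec_smul S _ ξ).trans hsq
  · simp only [smul_dotProduct_mulVec_smul, hGξ, dotProduct_smul, smul_eq_mul]
    linear_combination σ * hsq
  · rintro _ ⟨η, rfl, rfl⟩
    calc σ * (η ⬝ᵥ S *ᵥ η) ≤ τ * (η ⬝ᵥ S *ᵥ η) :=
          mul_le_mul_of_nonneg_right (hσ.2 ⟨ζ, hζ, hGζ⟩) hc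
      _ ≤ η ⬝ᵥ G *ᵥ η := hτ η

end Matrix

theorem empirical_gramian_generalized_eigenvalue_general
    (n p s : ℕ)
    (A : Matrix (Fin n) (Fin n) ℝ) (C : Matrix (Fin p) (Fin n) ℝ)
    (T ρ : ℝ) (hρ : 0 < ρ)
    -- the output map `y_x(t) = C e^{tA} x`
    (y : (Fin n → ℝ) → ℝ → (Fin p → ℝ))
    (hy : ∀ x t, y x t = C.mulVec ((NormedSpace.exp (t • A)).mulVec x))
    -- a linearly independent family in ℝⁿ and its Gram matrix `S`
    (e : Fin s → (Fin n → ℝ)) (he : LinearIndependent ℝ e)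
    (S : Matrix (Fin s) (Fin s) ℝ)
    (hS : ∀ i j, S i j = ∑ k, e i k * e j k)
    (x0 : Fin n → ℝ)
    -- the output deviations `Δy_i` and the empirical Gramian `G`
    (Δy : Fin s → ℝ → (Fin p → ℝ))
    (hΔy : ∀ i t, Δy i t = y (x0 + ρ • e i) t - y (x0 - ρ • e i) t)
    (G : Matrix (Fin s) (Fin s) ℝ)
    (hG : ∀ i j, G i j = (1 / (4 * ρ ^ 2)) * ∫ t in (0:ℝ)..T, ∑ k, Δy i t k * Δy j t k)
    -- `σmin` is the smallest generalized eigenvalue: `G ξ = σ S ξ` for some `ξ ≠ 0`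
    (σmin : ℝ)
    (hσ : IsLeast {σ : ℝ | ∃ ξ : Fin s → ℝ, ξ ≠ 0 ∧ G.mulVec ξ = σ • S.mulVec ξ} σmin) :
    sInf {r : ℝ | ∃ w : Fin n → ℝ, w ∈ Submodule.span ℝ (Set.range e) ∧
        Real.sqrt (∑ k, (w k) ^ 2) = ρ ∧
        r = ∫ t in (0:ℝ)..T, ∑ k, (y (x0 + w) t k - y x0 t k) ^ 2} =
      σmin * ρ ^ 2 := by
  set V : Matrix (Fin n) (Fin s) ℝ := of fun k i => e i k
  set F : ℝ → Matrix (Fin p) (Fin s) ℝ := fun t => C * NormedSpace.exp (t • A) * V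
  have hyF : ∀ x ξ t, y (x + V *ᵥ ξ) t - y x t = F t *ᵥ ξ := fun x ξ t => by
    simp only [hy, F, ← mulVec_mulVec, mulVec_add, add_sub_cancel_left]
  have hΔyF : ∀ i t k, Δy i t k = 2 * ρ * F t k i := fun i t k => by
    have hx : x0 + ρ • e i = x0 - ρ • e i + V *ᵥ Pi.single i (2 * ρ) := by
      ext l; simp [V, mulVec_single]; ring
    rw [hΔy, hx, hyF, mulVec_single]
    simp [mul_comm]
  have hSV : S = Vᵀ * V := ext fun i j => by simp [hS, V, mul_apply]
  have hGF : G = of fun i j => ∫ t in (0:ℝ)..T, ((F t)ᵀ * F t) i j := ext fun i j => by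
    have h4 : ∀ t, ∑ k, Δy i t k * Δy j t k = 4 * ρ ^ 2 * ((F t)ᵀ * F t) i j := fun t => by
      simp only [hΔyF, mul_apply, transpose_apply, Finset.mul_sum]
      exact Finset.sum_congr rfl fun k _ => by ring
    simp only [hG, h4, intervalIntegral.integral_const_mul, of_apply]
    field_simp
  have hout : ∀ ξ, ∫ t in (0:ℝ)..T, ∑ k, (y (x0 + V *ᵥ ξ) t k - y x0 t k) ^ 2 =
      ξ ⬝ᵥ G *ᵥ ξ := fun ξ => by
    rw [hGF, dotProduct_mulVec_intervalIntegral_transpose_mul_self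
      ((continuous_const.matrix_mul (continuous_exp_smul A)).matrix_mul continuous_const)]
    congr 1 with t
    rw [← hyF x0 ξ t]
    simp only [dotProduct, sq, Pi.sub_apply]
  have hSpos : S.PosDef := by
    rw [hSV, ← conjTranspose_eq_transpose_of_trivial]
    exact PosDef.conjTranspose_mul_self V (mulVec_injective_iff.2 he)
  have hGherm : G.IsHermitian := IsHermitian.ext fun i j => by simp [hG, mul_comm]
  rw [show e = V.col from rfl, setOf_mem_span_col_eq_image V _ hρ, ← hSV,
    Set.image_congr fun ξ _ => hout ξ]
  exact (isLeast_image_dotProduct_mulVec hGherm hSpos hσ (sq_nonneg ρ)).csInf_eq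

/-- For a linear system with a (not necessarily orthonormal) basis `e` of the estimation
space, the unobservability level is given by the smallest generalized eigenvalue of the
pencil `(G, S)`: the infimum of the squared `L²` output deviation over perturbations `w`
in the span of `e` of Euclidean norm `ρ` equals `σ_min · ρ²`. -/
theorem empirical_gramian_generalized_eigenvalue
    (n p s : ℕ) (hn : 0 < n) (hp : 0 < p) (hs : 0 < s)
    (A : Matrix (Fin n) (Fin n) ℝ) (C : Matrix (Fin p) (Fin n) ℝ)
    (T ρ : ℝ) (hT : 0 < T) (hρ : 0 < ρ)
    -- the output map `y_x(t) = C e^{tA} x`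
    (y : (Fin n → ℝ) → ℝ → (Fin p → ℝ))
    (hy : ∀ x t, y x t = C.mulVec ((NormedSpace.exp (t • A)).mulVec x))
    -- a linearly independent family in ℝⁿ and its Gram matrix `S`
    (e : Fin s → (Fin n → ℝ)) (he : LinearIndependent ℝ e)
    (S : Matrix (Fin s) (Fin s) ℝ)
    (hS : ∀ i j, S i j = ∑ k, e i k * e j k)
    (x0 : Fin n → ℝ)
    -- the output deviations `Δy_i` and the empirical Gramian `G`
    (Δy : Fin s → ℝ → (Fin p → ℝ))
    (hΔy : ∀ i t, Δy i t = y (x0 + ρ • e i) t - y (x0 - ρ • e i) t)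
    (G : Matrix (Fin s) (Fin s) ℝ)
    (hG : ∀ i j, G i j = (1 / (4 * ρ ^ 2)) * ∫ t in (0:ℝ)..T, ∑ k, Δy i t k * Δy j t k)
    -- `σmin` is the smallest generalized eigenvalue: `G ξ = σ S ξ` for some `ξ ≠ 0`
    (σmin : ℝ)
    (hσ : IsLeast {σ : ℝ | ∃ ξ : Fin s → ℝ, ξ ≠ 0 ∧ G.mulVec ξ = σ • S.mulVec ξ} σmin) :
    sInf {r : ℝ | ∃ w : Fin n → ℝ, w ∈ Submodule.span ℝ (Set.range e) ∧
        Real.sqrt (∑ k, (w k) ^ 2) = ρ ∧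
        r = ∫ t in (0:ℝ)..T, ∑ k, (y (x0 + w) t k - y x0 t k) ^ 2} =
      σmin * ρ ^ 2 :=
  empirical_gramian_generalized_eigenvalue_general n p s A C T ρ hρ y hy e he S hS x0 Δy hΔy G hG
    σmin hσ
end

section
/- As δ → 0, the smallest eigenvalue λ_min(δ) of the symmetric 2×2 matrix M(δ) = [[α11, α12 δ], [α12 δ, α22 δ²]] satisfies λ_min(δ) = K δ² + O(δ³), where K = ( (1/4)(e^{−4T} + 1) − (T² + 1/2) e^{−2T} ) / (1 − e^{−2T} ). -/
open Filter Topology Matrix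

lemma eig_min_formula (a b c : ℝ) (M : Matrix (Fin 2) (Fin 2) ℝ) (hM : M = !![a, b; b, c])
    (lam : ℝ)
    (h : IsLeast {σ : ℝ | ∃ ξ : Fin 2 → ℝ, ξ ≠ 0 ∧ M.mulVec ξ = σ • ξ} lam) :
    lam = (a + c - Real.sqrt ((a - c) ^ 2 + 4 * b ^ 2)) / 2 := by
  set s := Real.sqrt ((a - c) ^ 2 + 4 * b ^ 2) with hs
  have hs0 : 0 ≤ s := Real.sqrt_nonneg _
  have hs2 : s ^ 2 = (a - c) ^ 2 + 4 * b ^ 2 := Real.sq_sqrt (by positivity)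
  set σm := (a + c - s) / 2 with hσm
  have hchar : σm ^ 2 - (a + c) * σm + (a * c - b ^ 2) = 0 := by
    rw [hσm]; nlinarith [hs2]
  have hmem : σm ∈ {σ : ℝ | ∃ ξ : Fin 2 → ℝ, ξ ≠ 0 ∧ M.mulVec ξ = σ • ξ} := by
    by_cases hb : b = 0 ∧ σm = a
    · refine ⟨![1, 0], ?_, ?_⟩
      · intro hξ; have := congrFun hξ 0; simp at this
      · subst hM
        funext i
        fin_cases i <;>
          simp [Matrix.mulVec, dotProduct, Fin.sum_univ_two, hb.1, hb.2]
    · refine ⟨![b, σm - a], ?_, ?_⟩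
      · intro hξ
        apply hb
        constructor
        · have := congrFun hξ 0; simpa using this
        · have := congrFun hξ 1; simp at this; linarith
      · subst hM
        funext i
        fin_cases i
        · simp [Matrix.mulVec, dotProduct, Fin.sum_univ_two]
          ring
        · simp [Matrix.mulVec, dotProduct, Fin.sum_univ_two]
          linear_combination -hchar
  have hle : lam ≤ σm := h.2 hmem
  obtain ⟨ξ, hξ0, hξ⟩ := h.1
  have h0 := congrFun hξ 0
  have h1 := congrFun hξ 1
  subst hM
  simp [Matrix.mulVec, dotProduct, Fin.sum_univ_two] at h0 h1
  have hx : ((lam - a) * (lam - c) - b ^ 2) * ξ 0 = 0 := by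
    linear_combination (c - lam) * h0 - b * h1
  have hy : ((lam - a) * (lam - c) - b ^ 2) * ξ 1 = 0 := by
    linear_combination (-b) * h0 + (a - lam) * h1
  have hD : (lam - a) * (lam - c) - b ^ 2 = 0 := by
    by_contra hD
    apply hξ0
    funext i
    fin_cases i
    · exact (mul_eq_zero.mp hx).resolve_left hD
    · exact (mul_eq_zero.mp hy).resolve_left hD
  have hge : σm ≤ lam := by
    rw [hσm]
    nlinarith [hD, hs2, hs0, sq_nonneg (2 * lam - (a + c) + s)]
  linarith

set_option maxHeartbeats 1000000 in
/-- Example 1 of the paper: as `δ → 0`, the smallest eigenvalue of the matrix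
`M(δ) = [[α₁₁, α₁₂ δ], [α₁₂ δ, α₂₂ δ²]]` satisfies `λ_min(δ) = K δ² + O(δ³)` with
`K = ((1/4)(e^{−4T} + 1) − (T² + 1/2) e^{−2T}) / (1 − e^{−2T})`. -/
theorem smallest_eigenvalue_asymptotics
    (T α11 α12 α22 : ℝ) (hT : 0 < T)
    (hα11 : α11 = 1 - Real.exp (-2 * T))
    (hα12 : α12 = (T + 1 / 2) * Real.exp (-2 * T) - 1 / 2)
    (hα22 : α22 = 1 / 2 - (T ^ 2 + T + 1 / 2) * Real.exp (-2 * T))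
    (M : ℝ → Matrix (Fin 2) (Fin 2) ℝ)
    (hM : ∀ δ, M δ = !![α11, α12 * δ; α12 * δ, α22 * δ ^ 2])
    -- `λmin δ` is the smallest eigenvalue of the symmetric matrix `M δ`
    (lammin : ℝ → ℝ)
    (hlam : ∀ δ, IsLeast {σ : ℝ | ∃ ξ : Fin 2 → ℝ, ξ ≠ 0 ∧ (M δ).mulVec ξ = σ • ξ}
      (lammin δ)) :
    ∃ C : ℝ, ∃ δ0 > (0:ℝ), ∀ δ : ℝ, |δ| ≤ δ0 →
      |lammin δ - ((1 / 4) * (Real.exp (-4 * T) + 1) - (T ^ 2 + 1 / 2) * Real.exp (-2 * T))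
          / (1 - Real.exp (-2 * T)) * δ ^ 2| ≤ C * |δ| ^ 3 := by
  have he0 : 0 < Real.exp (-2 * T) := Real.exp_pos _
  have he1 : Real.exp (-2 * T) < 1 := by
    rw [Real.exp_lt_one_iff]
    linarith
  have ha : 0 < α11 := by rw [hα11]; linarith
  set Kv := ((1 / 4) * (Real.exp (-4 * T) + 1) - (T ^ 2 + 1 / 2) * Real.exp (-2 * T))
      / (1 - Real.exp (-2 * T)) with hKv
  have he4 : Real.exp (-4 * T) = Real.exp (-2 * T) * Real.exp (-2 * T) := by
    rw [← Real.exp_add]; ring_nf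
  have hne : (1 : ℝ) - Real.exp (-2 * T) ≠ 0 := by linarith
  have hKey : α11 * α22 - α12 ^ 2 = Kv * α11 := by
    rw [hKv, hα11]
    rw [div_mul_cancel₀ _ hne, hα12, hα22, he4]
    ring
  refine ⟨|Kv| * |α12| / α11, min 1 (α11 / (1 + |α22|)), lt_min one_pos (by positivity), ?_⟩
  intro δ hδ
  have hform := eig_min_formula α11 (α12 * δ) (α22 * δ ^ 2) (M δ) (by rw [hM]) (lammin δ)
      (hlam δ)
  set b := α12 * δ with hbdef
  set c := α22 * δ ^ 2 with hcdef
  set s := Real.sqrt ((α11 - c) ^ 2 + 4 * b ^ 2) with hs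
  have hs0 : 0 ≤ s := Real.sqrt_nonneg _
  have hs2 : s ^ 2 = (α11 - c) ^ 2 + 4 * b ^ 2 := Real.sq_sqrt (by positivity)
  have hδ1 : |δ| ≤ 1 := le_trans hδ (min_le_left _ _)
  have hδ2 : |δ| ≤ α11 / (1 + |α22|) := le_trans hδ (min_le_right _ _)
  have hδ2' : |δ| * (1 + |α22|) ≤ α11 := by
    rw [← le_div_iff₀ (by positivity)]; exact hδ2
  have hcle : c ≤ α11 := by
    have e1 : c ≤ |α22| * |δ| ^ 2 := by
      rw [hcdef, sq_abs]; nlinarith [le_abs_self α22, sq_nonneg δ]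
    have e2 : |α22| * |δ| ^ 2 ≤ |α22| * |δ| := by
      nlinarith [mul_nonneg (mul_nonneg (abs_nonneg α22) (abs_nonneg δ))
        (sub_nonneg.mpr hδ1)]
    have e3 : |α22| * |δ| ≤ α11 := by nlinarith [abs_nonneg δ, hδ2']
    linarith
  have hlb : α11 - c ≤ s := by
    calc α11 - c ≤ |α11 - c| := le_abs_self _
      _ = Real.sqrt ((α11 - c) ^ 2) := (Real.sqrt_sq_eq_abs _).symm
      _ ≤ s := Real.sqrt_le_sqrt (by nlinarith [sq_nonneg b])
  have hub : s ≤ (α11 - c) + 2 * |b| := by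
    rw [hs]
    calc Real.sqrt ((α11 - c) ^ 2 + 4 * b ^ 2)
        ≤ Real.sqrt (((α11 - c) + 2 * |b|) ^ 2) := by
          apply Real.sqrt_le_sqrt
          nlinarith [mul_nonneg (abs_nonneg b) (by linarith : (0:ℝ) ≤ α11 - c), sq_abs b]
      _ = (α11 - c) + 2 * |b| := Real.sqrt_sq (by nlinarith [abs_nonneg b])
  set lp := (α11 + c + s) / 2 with hlp
  have hlpa : α11 ≤ lp := by rw [hlp]; linarith
  have hlpu : lp - α11 ≤ |b| := by rw [hlp]; linarith
  have hlppos : 0 < lp := lt_of_lt_of_le ha hlpa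
  have hprod : lammin δ * lp = Kv * α11 * δ ^ 2 := by
    rw [hform, hlp]
    linear_combination (-1/4 : ℝ) * hs2 + δ ^ 2 * hKey + α11 * hcdef - (b + α12 * δ) * hbdef
  have hkey : lammin δ - Kv * δ ^ 2 = Kv * δ ^ 2 * (α11 - lp) / lp := by
    field_simp
    linear_combination hprod
  rw [hkey]
  have habs : |Kv * δ ^ 2 * (α11 - lp) / lp| = |Kv| * δ ^ 2 * (lp - α11) / lp := by
    rw [abs_div, abs_mul, abs_mul, abs_of_nonneg (sq_nonneg δ), abs_of_pos hlppos,
      abs_sub_comm, abs_of_nonneg (by linarith : (0:ℝ) ≤ lp - α11)]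
  rw [habs]
  have hb2 : lp - α11 ≤ |α12| * |δ| := by rw [← abs_mul]; exact hlpu
  calc |Kv| * δ ^ 2 * (lp - α11) / lp
      ≤ |Kv| * δ ^ 2 * (|α12| * |δ|) / α11 := by
        apply div_le_div₀ (by positivity)
          (mul_le_mul_of_nonneg_left hb2 (by positivity)) ha hlpa
    _ = |Kv| * |α12| / α11 * |δ| ^ 3 := by
        rw [show δ ^ 2 = |δ| ^ 2 from (sq_abs δ).symm]
        ring
end
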